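/- For every root ξ in the broad base T, the polynomial N_ξ (equal to the variable x_ξ if ξ ∈ M ∖ M', and to the minor M_ξ if ξ ∈ M') is invariant under the adjoint action of the unipotent radical U of the parabolic group P on K[m]. -/

import Mathlib

open scoped Matrix Classical
open MvPolynomial

/-- `Rsum r k = r 0 + ⋯ + r (k-1)`, the partial sum `R_k` of block sizes. -/
def Rsum (r : ℕ → ℕ) (k : ℕ) : ℕ := (Finset.range k).sum r

/-- Index of the diagonal block containing row/column `a` (0-indexed). -/
def blockOf (r : ℕ → ℕ) (s a : ℕ) : ℕ :=
  ((Finset.range s).filter fun k => Rsum r (k + 1) ≤ a).card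

/-- The set `M` of roots `(i,j)` of the nilradical `m`. -/
def Mset (r : ℕ → ℕ) (s n : ℕ) : Finset (Fin n × Fin n) :=
  Finset.univ.filter fun p => blockOf r s (p.1 : ℕ) < blockOf r s (p.2 : ℕ)

/-- `γ' > γ` iff `γ' − γ` is a positive root. -/
def rootGt {n : ℕ} (γ' γ : Fin n × Fin n) : Prop :=
  (γ'.1 = γ.1 ∧ γ.2 < γ'.2) ∨ (γ'.2 = γ.2 ∧ γ'.1 < γ.1)

/-- A base `S` of `M`: pairwise incomparable, and every root of `M ∖ S`
exceeds some element of `S`. -/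
def IsBase {n : ℕ} (M S : Finset (Fin n × Fin n)) : Prop :=
  S ⊆ M ∧
  (∀ ξ ∈ S, ∀ η ∈ S, ξ ≠ η → ¬rootGt ξ η ∧ ¬rootGt η ξ) ∧
  (∀ γ ∈ M, γ ∉ S → ∃ ξ ∈ S, rootGt γ ξ)

/-- `p` is a positive root of the reductive (block-diagonal) part `r`. -/
def inDr (r : ℕ → ℕ) (s : ℕ) {n : ℕ} (p : Fin n × Fin n) : Prop :=
  p.1 < p.2 ∧ blockOf r s (p.1 : ℕ) = blockOf r s (p.2 : ℕ)

/-- The coordinate ring `K[m]`: polynomials in the variables `x_ξ`, `ξ ∈ M`. -/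
abbrev Rpoly (K : Type) [Field K] (r : ℕ → ℕ) (s n : ℕ) : Type :=
  MvPolynomial {p : Fin n × Fin n // p ∈ Mset r s n} K

/-- The formal matrix `𝕏` of variables (zero outside `M`). -/
noncomputable def Xmat (K : Type) [Field K] (r : ℕ → ℕ) (s n : ℕ) :
    Matrix (Fin n) (Fin n) (Rpoly K r s n) :=
  Matrix.of fun i j => if h : (i, j) ∈ Mset r s n then MvPolynomial.X ⟨(i, j), h⟩ else 0

/-- The minor of a matrix on the ordered row set `I` and ordered column set `J`. -/
noncomputable def minorDet {n : ℕ} {A : Type} [CommRing A]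
    (X : Matrix (Fin n) (Fin n) A) (I J : Finset (Fin n)) : A :=
  if h : J.card = I.card then
    Matrix.det (Matrix.of fun p q : Fin I.card =>
      X (I.orderIsoOfFin rfl p).1 (J.orderIsoOfFin h q).1)
  else 0

/-- The minor `M_γ` attached to a root `γ = (a,b)`: rows `ord{a, i₁, …, i_k}`,
columns `ord{j₁, …, j_k, b}`, where `S_γ = {(i,j) ∈ S : i > a, j < b}`. -/
noncomputable def Mminor (K : Type) [Field K] (r : ℕ → ℕ) (s n : ℕ)
    (S : Finset (Fin n × Fin n)) (γ : Fin n × Fin n) : Rpoly K r s n :=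
  minorDet (Xmat K r s n)
    (insert γ.1 ((S.filter fun p => γ.1 < p.1 ∧ p.2 < γ.2).image Prod.fst))
    (insert γ.2 ((S.filter fun p => γ.1 < p.1 ∧ p.2 < γ.2).image Prod.snd))

/-- The polynomial `L_{φ_q}` for an admissible pair `q = (ξ, ξ')`:
`Σ_{α₁+α₂=α_q, α₁,α₂ ∈ Δ⁺_r ∪ {0}} M_{ξ+α₁} M_{α₂+ξ'}`. -/
noncomputable def Lpoly (K : Type) [Field K] (r : ℕ → ℕ) (s n : ℕ)
    (S : Finset (Fin n × Fin n)) (ξ ξ' : Fin n × Fin n) : Rpoly K r s n :=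
  ∑ m ∈ Finset.univ.filter (fun m : Fin n =>
      (m = ξ.2 ∨ inDr r s (ξ.2, m)) ∧ (m = ξ'.1 ∨ inDr r s (m, ξ'.1))),
    Mminor K r s n S (ξ.1, m) * Mminor K r s n S (m, ξ'.2)

/-- The set `Φ` of roots `φ_q = α_q + ξ'` attached to admissible pairs `q = (ξ, ξ')`. -/
noncomputable def PhiSet (r : ℕ → ℕ) (s n : ℕ) (S : Finset (Fin n × Fin n)) :
    Finset (Fin n × Fin n) :=
  ((S ×ˢ S).filter fun q => inDr r s (q.1.2, q.2.1)).image fun q => (q.1.2, q.2.2)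

/-- The adjoint action of `g` on `K[m]`: the substitution `x_ξ ↦ (g⁻¹ 𝕏 g)_ξ`,
so that `(g·f)(x) = f(g⁻¹ x g)`. -/
noncomputable def adjAct (K : Type) [Field K] (r : ℕ → ℕ) (s n : ℕ)
    (g : Matrix (Fin n) (Fin n) K) : Rpoly K r s n →ₐ[K] Rpoly K r s n :=
  MvPolynomial.aeval fun ξ : {p : Fin n × Fin n // p ∈ Mset r s n} =>
    ((g⁻¹).map (fun a => (MvPolynomial.C a : Rpoly K r s n)) * Xmat K r s n *
      g.map (fun a => (MvPolynomial.C a : Rpoly K r s n))) ξ.1.1 ξ.1.2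

/-- Upper unitriangular matrices: the group `N`. -/
def IsUnitriangular {K : Type} [Field K] {n : ℕ} (g : Matrix (Fin n) (Fin n) K) : Prop :=
  (∀ i, g i i = 1) ∧ ∀ i j : Fin n, j < i → g i j = 0

/-- Membership in the unipotent radical `U` of `P`: `g = I + u` with `u ∈ m`. -/
def InU {K : Type} [Field K] (r : ℕ → ℕ) (s n : ℕ) (g : Matrix (Fin n) (Fin n) K) : Prop :=
  (∀ i, g i i = 1) ∧ ∀ i j : Fin n, i ≠ j → (i, j) ∉ Mset r s n → g i j = 0

/-- The subalgebra of `K[m]` of polynomials invariant under the adjoint action of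
all elements of a set `G` of matrices. -/
noncomputable def invariantAlg (K : Type) [Field K] (r : ℕ → ℕ) (s n : ℕ)
    (G : Set (Matrix (Fin n) (Fin n) K)) : Subalgebra K (Rpoly K r s n) where
  carrier := {f | ∀ g ∈ G, adjAct K r s n g f = f}
  mul_mem' := fun ha hb g hg => by rw [map_mul, ha g hg, hb g hg]
  add_mem' := fun ha hb g hg => by rw [map_add, ha g hg, hb g hg]
  algebraMap_mem' := fun c g hg => (adjAct K r s n g).commutes c

/-- `M'`: the roots of `M` with `E_ξ ∈ m²`, i.e. not lying in a superdiagonal block. -/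
def Mprime (r : ℕ → ℕ) (s n : ℕ) : Finset (Fin n × Fin n) :=
  (Mset r s n).filter fun p => blockOf r s (p.1 : ℕ) + 1 < blockOf r s (p.2 : ℕ)

/-- The broad base `T`: roots `ξ ∈ S`, together with roots `ξ ∈ M` such that
`ξ > γ` for some `γ ∈ S` with `x_ξ`, `x_γ` in the same block `X_{i,j}`. -/
noncomputable def Tset (r : ℕ → ℕ) (s n : ℕ) (S : Finset (Fin n × Fin n)) :
    Finset (Fin n × Fin n) :=
  S ∪ (Mset r s n).filter fun ξ => ∃ γ ∈ S, rootGt ξ γ ∧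
    blockOf r s (ξ.1 : ℕ) = blockOf r s (γ.1 : ℕ) ∧
    blockOf r s (ξ.2 : ℕ) = blockOf r s (γ.2 : ℕ)

/-- The invariant `N_ξ`: the variable `x_ξ` for `ξ ∈ M ∖ M'`, the minor `M_ξ` for `ξ ∈ M'`. -/
noncomputable def Npoly (K : Type) [Field K] (r : ℕ → ℕ) (s n : ℕ)
    (S : Finset (Fin n × Fin n)) (ξ : Fin n × Fin n) : Rpoly K r s n :=
  if ξ ∈ Mprime r s n then Mminor K r s n S ξ
  else if h : ξ ∈ Mset r s n then MvPolynomial.X ⟨ξ, h⟩ else 0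

/-- A matrix lies in the nilradical `m`. -/
def memNilrad {K : Type} [Field K] (r : ℕ → ℕ) (s n : ℕ)
    (x : Matrix (Fin n) (Fin n) K) : Prop :=
  ∀ p : Fin n × Fin n, p ∉ Mset r s n → x p.1 p.2 = 0

/-- `W` is a Zariski-open subset of the affine space `m`. -/
def IsZariskiOpenIn (K : Type) [Field K] (r : ℕ → ℕ) (s n : ℕ)
    (W : Set (Matrix (Fin n) (Fin n) K)) : Prop :=
  ∃ I : Set (Rpoly K r s n),
    W = {x | memNilrad r s n x ∧ ∃ f ∈ I,
      MvPolynomial.eval (fun ξ : {p : Fin n × Fin n // p ∈ Mset r s n} => x ξ.1.1 ξ.1.2) f ≠ 0}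

/-!
Write `β` for the block index of a row or column. An element `g ∈ U` and its inverse are
unipotent and block upper triangular, so in `(g⁻¹ 𝕏 g)_{ij} = Σ g⁻¹_{ik} x_{kl} g_{lj}` only
indices with `β i ≤ β k < β l ≤ β j` contribute. View `N_ξ` as a minor of `𝕏` with rows `I` and
columns `J` (for `ξ ∉ M'` the `1 × 1` minor `x_ξ`). Its rows lie in blocks `≥ β ξ₁`, its columns
in blocks `≤ β ξ₂`, and, by the base property, every index in a block strictly between is both
a row and a column. Hence the `(I, J)` submatrix of `g⁻¹ 𝕏 g` is `g⁻¹[I,I] 𝕏[I,J] g[J,J]`, whose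
outer factors are unitriangular.
-/

lemma Matrix.mul_mul_apply_eq_sum {ι κ μ ν R : Type*} [Fintype κ] [Fintype μ] [CommRing R]
    (A : Matrix ι κ R) (X : Matrix κ μ R) (B : Matrix μ ν R) (i : ι) (j : ν) :
    (A * X * B) i j = ∑ k, ∑ l, A i k * X k l * B l j := by
  simp only [Matrix.mul_apply, Finset.sum_mul]
  exact Finset.sum_comm

section StrictBlockUpper

variable {ι κ R : Type*} [CommRing R]

def IsStrictBlockUpper (β : ι → ℕ) (u : Matrix ι ι R) : Prop :=
  ∀ i j, ¬β i < β j → u i j = 0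

def IsBlockAdmissible (β : ι → ℕ) (lo hi : ℕ) (I J : Finset ι) : Prop :=
  (∀ i ∈ I, lo ≤ β i) ∧ (∀ j ∈ J, β j ≤ hi) ∧ ∀ k, lo < β k → β k < hi → k ∈ I ∧ k ∈ J

variable {β : ι → ℕ} {u A X B : Matrix ι ι R}

lemma isBlockAdmissible_singleton {a b : ι} (h : β b ≤ β a + 1) :
    IsBlockAdmissible β (β a) (β b) {a} {b} :=
  ⟨by simp, by simp, fun _ h1 h2 => by omega⟩

namespace IsStrictBlockUpper

lemma neg (hu : IsStrictBlockUpper β u) : IsStrictBlockUpper β (-u) :=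
  fun i j h => by rw [Matrix.neg_apply, hu i j h, neg_zero]

lemma sum {s : Finset κ} {v : κ → Matrix ι ι R} (hv : ∀ p ∈ s, IsStrictBlockUpper β (v p)) :
    IsStrictBlockUpper β (∑ p ∈ s, v p) :=
  fun i j h => by
    rw [Matrix.sum_apply]
    exact Finset.sum_eq_zero fun p hp => hv p hp i j h

lemma map {S : Type*} [CommRing S] (hu : IsStrictBlockUpper β u) (f : R →+* S) :
    IsStrictBlockUpper β (u.map f) :=
  fun i j h => by rw [Matrix.map_apply, hu i j h, map_zero]

variable [DecidableEq ι]

lemma map_sub_one {S : Type*} [CommRing S] (hA : IsStrictBlockUpper β (A - 1)) (f : R →+* S) :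
    IsStrictBlockUpper β (A.map f - 1) := by
  simpa [Matrix.map_sub] using hA.map f

lemma eq_or_lt_of_apply_ne_zero (hA : IsStrictBlockUpper β (A - 1)) {i k : ι}
    (h : A i k ≠ 0) : i = k ∨ β i < β k := by
  by_contra! hc
  exact h (by simpa [Matrix.one_apply_ne hc.1] using hA i k (not_lt.2 hc.2))

lemma support_of_mul_mul_ne_zero (hA : IsStrictBlockUpper β (A - 1))
    (hX : IsStrictBlockUpper β X) (hB : IsStrictBlockUpper β (B - 1)) {i j k l : ι}
    (h : A i k * X k l * B l j ≠ 0) :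
    (i = k ∨ β i < β k) ∧ β k < β l ∧ (l = j ∨ β l < β j) :=
  ⟨hA.eq_or_lt_of_apply_ne_zero (left_ne_zero_of_mul (left_ne_zero_of_mul h)),
    not_not.1 fun hkl => h (by rw [hX k l hkl, mul_zero, zero_mul]),
    hB.eq_or_lt_of_apply_ne_zero (right_ne_zero_of_mul h)⟩

lemma mem_of_mul_mul_ne_zero (hA : IsStrictBlockUpper β (A - 1))
    (hX : IsStrictBlockUpper β X) (hB : IsStrictBlockUpper β (B - 1)) {lo hi : ℕ}
    {I J : Finset ι} (hIJ : IsBlockAdmissible β lo hi I J) {i j k l : ι} (hi : i ∈ I)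
    (hj : j ∈ J) (h : A i k * X k l * B l j ≠ 0) : k ∈ I ∧ l ∈ J := by
  obtain ⟨hI, hJ, hmid⟩ := hIJ
  have hlo := hI i hi
  have hhi := hJ j hj
  obtain ⟨hik, hkl, hlj⟩ := support_of_mul_mul_ne_zero hA hX hB h
  constructor
  · rcases hik with rfl | hik
    · exact hi
    · rcases hlj with rfl | hlj <;> exact (hmid k (by omega) (by omega)).1
  · rcases hlj with rfl | hlj
    · exact hj
    · rcases hik with rfl | hik <;> exact (hmid l (by omega) (by omega)).2

lemma det_submatrix_eq_one [LinearOrder κ] [Fintype κ] (hA : IsStrictBlockUpper β (A - 1))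
    {e : κ → ι} (he : Function.Injective e) (hmono : Monotone (β ∘ e)) :
    (A.submatrix e e).det = 1 := by
  have hdiag : ∀ p, A (e p) (e p) = 1 := fun p => by
    simpa [sub_eq_zero] using hA (e p) (e p) (lt_irrefl _)
  rw [Matrix.det_of_isUpperTriangular]
  · exact Finset.prod_eq_one fun p _ => hdiag p
  intro p q (hqp : q < p)
  have h := hA (e p) (e q) (not_lt.2 (hmono hqp.le))
  rwa [Matrix.sub_apply, Matrix.one_apply_ne (he.ne hqp.ne'), sub_zero] at h

variable [Fintype ι]

lemma pow_apply_eq_zero (hu : IsStrictBlockUpper β u) :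
    ∀ (p : ℕ) {i j : ι}, β j < β i + p → (u ^ p) i j = 0
  | 0, i, j, h => by
    rw [pow_zero, Matrix.one_apply_ne]
    rintro rfl
    omega
  | p + 1, i, j, h => by
    rw [pow_succ, Matrix.mul_apply]
    refine Finset.sum_eq_zero fun k _ => ?_
    by_cases hk : β k < β j
    · rw [hu.pow_apply_eq_zero p (by omega), zero_mul]
    · rw [hu k j hk, mul_zero]

lemma pow_add_one (hu : IsStrictBlockUpper β u) (p : ℕ) : IsStrictBlockUpper β (u ^ (p + 1)) :=
  fun _ _ h => hu.pow_apply_eq_zero (p + 1) (by omega)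

lemma pow_eq_zero (hu : IsStrictBlockUpper β u) : u ^ (Finset.univ.sup β + 1) = 0 :=
  Matrix.ext fun _ j => hu.pow_apply_eq_zero _ <| by
    have := Finset.le_sup (f := β) (Finset.mem_univ j)
    omega

/-- The inverse is the finite geometric series `Σ (-(g - 1))ᵖ`. -/
lemma inv_sub_one {g : Matrix ι ι R} (hg : IsStrictBlockUpper β (g - 1)) :
    IsStrictBlockUpper β (g⁻¹ - 1) := by
  set u := g - 1 with hu
  have hinv : g⁻¹ = ∑ p ∈ Finset.range (Finset.univ.sup β + 2), (-u) ^ p := by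
    refine Matrix.inv_eq_right_inv ?_
    rw [show g = 1 - -u by rw [hu]; abel, mul_neg_geom_sum, pow_succ, hg.neg.pow_eq_zero,
      zero_mul, sub_zero]
  rw [hinv, Finset.sum_range_succ', pow_zero, add_sub_cancel_right]
  exact sum fun p _ => hg.neg.pow_add_one p

lemma conj (hA : IsStrictBlockUpper β (A - 1)) (hX : IsStrictBlockUpper β X)
    (hB : IsStrictBlockUpper β (B - 1)) : IsStrictBlockUpper β (A * X * B) := by
  intro i j hij
  rw [Matrix.mul_mul_apply_eq_sum]
  refine Finset.sum_eq_zero fun k _ => Finset.sum_eq_zero fun l _ => ?_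
  by_contra h
  obtain ⟨hik, hkl, hlj⟩ := support_of_mul_mul_ne_zero hA hX hB h
  rcases hik with rfl | hik <;> rcases hlj with rfl | hlj <;> omega

lemma submatrix_conj [Fintype κ] {κ' : Type*} [Fintype κ'] (hA : IsStrictBlockUpper β (A - 1))
    (hX : IsStrictBlockUpper β X) (hB : IsStrictBlockUpper β (B - 1)) {lo hi : ℕ}
    {I J : Finset ι} (hIJ : IsBlockAdmissible β lo hi I J) {e : κ → ι} {f : κ' → ι}
    (he : Function.Injective e) (hf : Function.Injective f) (hrange_e : Set.range e = I)
    (hrange_f : Set.range f = J) :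
    (A * X * B).submatrix e f = A.submatrix e e * X.submatrix e f * B.submatrix f f := by
  ext a b
  have hmem := fun {k l : ι} => mem_of_mul_mul_ne_zero (k := k) (l := l) hA hX hB hIJ
    (hrange_e ▸ Set.mem_range_self a) (hrange_f ▸ Set.mem_range_self b)
  rw [Matrix.submatrix_apply, Matrix.mul_mul_apply_eq_sum, Matrix.mul_mul_apply_eq_sum]
  refine (Fintype.sum_of_injective e he _ _ (fun k hk => ?_) fun a' =>
    Fintype.sum_of_injective f hf (fun b' => A (e a) (e a') * X (e a') (f b') * B (f b') (f b))
      (fun l => A (e a) (e a') * X (e a') l * B l (f b)) (fun l hl => ?_) fun _ => rfl).symm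
  · refine Finset.sum_eq_zero fun l _ => not_not.1 fun h => hk ?_
    exact hrange_e ▸ (hmem h).1
  · exact not_not.1 fun h => hl (hrange_f ▸ (hmem h).2)

lemma det_submatrix_conj [Fintype κ] [LinearOrder κ] (hA : IsStrictBlockUpper β (A - 1))
    (hX : IsStrictBlockUpper β X) (hB : IsStrictBlockUpper β (B - 1)) {lo hi : ℕ}
    {I J : Finset ι} (hIJ : IsBlockAdmissible β lo hi I J) {e f : κ → ι}
    (he : Function.Injective e) (hf : Function.Injective f) (hmono_e : Monotone (β ∘ e))
    (hmono_f : Monotone (β ∘ f)) (hrange_e : Set.range e = I) (hrange_f : Set.range f = J) :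
    ((A * X * B).submatrix e f).det = (X.submatrix e f).det := by
  rw [submatrix_conj hA hX hB hIJ he hf hrange_e hrange_f, Matrix.det_mul, Matrix.det_mul,
    det_submatrix_eq_one hA he hmono_e, det_submatrix_eq_one hB hf hmono_f, one_mul, mul_one]

end IsStrictBlockUpper

end StrictBlockUpper

section Minor

variable {n : ℕ} {R : Type} [CommRing R]

lemma map_minorDet {S F : Type} [CommRing S] [FunLike F R S] [RingHomClass F R S] (φ : F)
    (X : Matrix (Fin n) (Fin n) R) (I J : Finset (Fin n)) :
    φ (minorDet X I J) = minorDet (X.map φ) I J := by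
  unfold minorDet
  split_ifs
  · exact RingHom.map_det (φ : R →+* S) _
  · exact map_zero φ

lemma minorDet_singleton (X : Matrix (Fin n) (Fin n) R) (i j : Fin n) :
    minorDet X {i} {j} = X i j := by
  have : Unique (Fin ({i} : Finset (Fin n)).card) := Finset.card_singleton i ▸ inferInstance
  rw [minorDet, dif_pos (by simp), Matrix.det_unique]
  simp only [Matrix.of_apply, Finset.coe_orderIsoOfFin_apply]
  congr <;> exact Finset.mem_singleton.1 (Finset.orderEmbOfFin_mem _ _ _)

lemma minorDet_conj {β : Fin n → ℕ} (hβ : Monotone β) {A X B : Matrix (Fin n) (Fin n) R}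
    (hA : IsStrictBlockUpper β (A - 1)) (hX : IsStrictBlockUpper β X)
    (hB : IsStrictBlockUpper β (B - 1)) {lo hi : ℕ} {I J : Finset (Fin n)}
    (hIJ : IsBlockAdmissible β lo hi I J) :
    minorDet (A * X * B) I J = minorDet X I J := by
  unfold minorDet
  split_ifs with h
  · exact hA.det_submatrix_conj hX hB hIJ (I.orderEmbOfFin rfl).injective
      (J.orderEmbOfFin h).injective (hβ.comp (I.orderEmbOfFin rfl).monotone)
      (hβ.comp (J.orderEmbOfFin h).monotone) (I.range_orderEmbOfFin rfl)
      (J.range_orderEmbOfFin h)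
  · rfl

end Minor

section Base

variable {n : ℕ} {M S : Finset (Fin n × Fin n)} {a b k : Fin n}

lemma IsBase.exists_snd_eq (hS : IsBase M S) (hab : (a, b) ∈ S) (hak : (a, k) ∈ M)
    (hkb : k < b) : ∃ σ ∈ S, σ.2 = k ∧ a < σ.1 := by
  obtain ⟨-, hanti, hcov⟩ := hS
  have hnot : (a, k) ∉ S := fun h =>
    (hanti _ hab _ h fun he => hkb.ne' (congrArg Prod.snd he)).1 (Or.inl ⟨rfl, hkb⟩)
  obtain ⟨σ, hσ, ⟨h1, h2⟩ | ⟨h1, h2⟩⟩ := hcov _ hak hnot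
  · have hne : ((a, b) : Fin n × Fin n) ≠ σ := fun he => (h2.trans hkb).ne (he ▸ rfl)
    exact absurd (Or.inl ⟨h1, h2.trans hkb⟩) (hanti _ hab σ hσ hne).1
  · exact ⟨σ, hσ, h1.symm, h2⟩

lemma IsBase.exists_fst_eq (hS : IsBase M S) (hab : (a, b) ∈ S) (hkb : (k, b) ∈ M)
    (hak : a < k) : ∃ σ ∈ S, σ.1 = k ∧ σ.2 < b := by
  obtain ⟨-, hanti, hcov⟩ := hS
  have hnot : (k, b) ∉ S := fun h =>
    (hanti _ hab _ h fun he => hak.ne (congrArg Prod.fst he)).1 (Or.inr ⟨rfl, hak⟩)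
  obtain ⟨σ, hσ, ⟨h1, h2⟩ | ⟨h1, h2⟩⟩ := hcov _ hkb hnot
  · exact ⟨σ, hσ, h1.symm, h2⟩
  · have hne : ((a, b) : Fin n × Fin n) ≠ σ := fun he => (hak.trans h2).ne' (he ▸ rfl)
    exact absurd (Or.inr ⟨h1, hak.trans h2⟩) (hanti _ hab σ hσ hne).1

end Base

section Parabolic

variable {K : Type} [Field K] {r : ℕ → ℕ} {s n : ℕ}

def blockIdx (r : ℕ → ℕ) (s : ℕ) {n : ℕ} (i : Fin n) : ℕ :=
  blockOf r s i

lemma blockIdx_mono : Monotone (blockIdx r s (n := n)) :=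
  fun a b h => by
    unfold blockIdx blockOf
    exact Finset.card_le_card (Finset.monotone_filter_right _ fun _ _ hk => hk.trans h)

lemma lt_of_blockIdx_lt {a b : Fin n} (h : blockIdx r s a < blockIdx r s b) : a < b :=
  blockIdx_mono.reflect_lt h

lemma mem_Mset_iff {p : Fin n × Fin n} :
    p ∈ Mset r s n ↔ blockIdx r s p.1 < blockIdx r s p.2 := by
  simp [Mset, blockIdx]

lemma InU.isStrictBlockUpper_sub_one {g : Matrix (Fin n) (Fin n) K} (hg : InU r s n g) :
    IsStrictBlockUpper (blockIdx r s) (g - 1) := by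
  intro i j hij
  rw [Matrix.sub_apply]
  by_cases h : i = j
  · subst h
    rw [hg.1, Matrix.one_apply_eq, sub_self]
  · rw [hg.2 i j h (mt mem_Mset_iff.1 hij), Matrix.one_apply_ne h, sub_zero]

lemma isStrictBlockUpper_Xmat : IsStrictBlockUpper (blockIdx r s) (Xmat K r s n) :=
  fun _ _ h => dif_neg (mt mem_Mset_iff.1 h)

lemma Xmat_apply_of_mem {p : Fin n × Fin n} (h : p ∈ Mset r s n) :
    Xmat K r s n p.1 p.2 = X ⟨p, h⟩ :=
  dif_pos h

lemma InU.Xmat_map_adjAct {g : Matrix (Fin n) (Fin n) K} (hg : InU r s n g) :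
    (Xmat K r s n).map (adjAct K r s n g) = (g⁻¹).map C * Xmat K r s n * g.map C := by
  have hg1 := hg.isStrictBlockUpper_sub_one
  ext i j
  by_cases h : (i, j) ∈ Mset r s n
  · rw [Matrix.map_apply, Xmat_apply_of_mem h, adjAct, aeval_X]
  · have hconj := (hg1.inv_sub_one.map_sub_one C).conj isStrictBlockUpper_Xmat (hg1.map_sub_one C)
    rw [Matrix.map_apply, isStrictBlockUpper_Xmat i j (mt (mem_Mset_iff (p := (i, j))).2 h), map_zero,
      hconj i j (mt (mem_Mset_iff (p := (i, j))).2 h)]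

lemma InU.adjAct_minorDet {g : Matrix (Fin n) (Fin n) K} (hg : InU r s n g) {lo hi : ℕ}
    {I J : Finset (Fin n)} (hIJ : IsBlockAdmissible (blockIdx r s) lo hi I J) :
    adjAct K r s n g (minorDet (Xmat K r s n) I J) = minorDet (Xmat K r s n) I J := by
  have hg1 := hg.isStrictBlockUpper_sub_one
  rw [map_minorDet, hg.Xmat_map_adjAct]
  exact minorDet_conj blockIdx_mono (hg1.inv_sub_one.map_sub_one C) isStrictBlockUpper_Xmat
    (hg1.map_sub_one C) hIJ

def minorRows (S : Finset (Fin n × Fin n)) (γ : Fin n × Fin n) : Finset (Fin n) :=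
  insert γ.1 ((S.filter fun p => γ.1 < p.1 ∧ p.2 < γ.2).image Prod.fst)

def minorCols (S : Finset (Fin n × Fin n)) (γ : Fin n × Fin n) : Finset (Fin n) :=
  insert γ.2 ((S.filter fun p => γ.1 < p.1 ∧ p.2 < γ.2).image Prod.snd)

lemma Mminor_eq_minorDet (S : Finset (Fin n × Fin n)) (γ : Fin n × Fin n) :
    Mminor K r s n S γ = minorDet (Xmat K r s n) (minorRows S γ) (minorCols S γ) :=
  rfl

lemma exists_base_of_mem_Tset {S : Finset (Fin n × Fin n)} {ξ : Fin n × Fin n}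
    (hξ : ξ ∈ Tset r s n S) :
    ∃ γ ∈ S, ξ.1 ≤ γ.1 ∧ γ.2 ≤ ξ.2 ∧
      blockIdx r s γ.1 = blockIdx r s ξ.1 ∧ blockIdx r s γ.2 = blockIdx r s ξ.2 := by
  rcases Finset.mem_union.1 hξ with h | h
  · exact ⟨ξ, h, le_rfl, le_rfl, rfl, rfl⟩
  · obtain ⟨-, γ, hγ, ⟨h1, h2⟩ | ⟨h1, h2⟩, hb1, hb2⟩ := Finset.mem_filter.1 h
    · exact ⟨γ, hγ, h1.le, h2.le, hb1.symm, hb2.symm⟩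
    · exact ⟨γ, hγ, h2.le, h1.ge, hb1.symm, hb2.symm⟩

lemma isBlockAdmissible_minorRows_minorCols {S : Finset (Fin n × Fin n)}
    (hS : IsBase (Mset r s n) S) {ξ : Fin n × Fin n} (hξ : ξ ∈ Tset r s n S) :
    IsBlockAdmissible (blockIdx r s) (blockIdx r s ξ.1) (blockIdx r s ξ.2)
      (minorRows S ξ) (minorCols S ξ) := by
  obtain ⟨γ, hγ, h1, h2, hb1, hb2⟩ := exists_base_of_mem_Tset hξ
  refine ⟨fun i hi => ?_, fun j hj => ?_, fun k hk1 hk2 => ⟨?_, ?_⟩⟩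
  · rcases Finset.mem_insert.1 hi with rfl | hi
    · exact le_rfl
    · obtain ⟨p, hp, rfl⟩ := Finset.mem_image.1 hi
      exact blockIdx_mono (Finset.mem_filter.1 hp).2.1.le
  · rcases Finset.mem_insert.1 hj with rfl | hj
    · exact le_rfl
    · obtain ⟨p, hp, rfl⟩ := Finset.mem_image.1 hj
      exact blockIdx_mono (Finset.mem_filter.1 hp).2.2.le
  · obtain ⟨σ, hσ, rfl, hσ2⟩ := hS.exists_fst_eq hγ (mem_Mset_iff.2 (hb2 ▸ hk2))
      (lt_of_blockIdx_lt (hb1 ▸ hk1))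
    exact Finset.mem_insert_of_mem (Finset.mem_image.2
      ⟨σ, Finset.mem_filter.2 ⟨hσ, lt_of_blockIdx_lt hk1, hσ2.trans_le h2⟩, rfl⟩)
  · obtain ⟨σ, hσ, rfl, hσ1⟩ := hS.exists_snd_eq hγ (mem_Mset_iff.2 (hb1 ▸ hk1))
      (lt_of_blockIdx_lt (hb2 ▸ hk2))
    exact Finset.mem_insert_of_mem (Finset.mem_image.2
      ⟨σ, Finset.mem_filter.2 ⟨hσ, h1.trans_lt hσ1, lt_of_blockIdx_lt hk2⟩, rfl⟩)

end Parabolic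

theorem statement10_general (K : Type) [Field K]
    (n s : ℕ) (r : ℕ → ℕ)
    (S : Finset (Fin n × Fin n)) (hS : IsBase (Mset r s n) S)
    (ξ : Fin n × Fin n) (hξ : ξ ∈ Tset r s n S)
    (g : Matrix (Fin n) (Fin n) K) (hg : InU r s n g) :
    adjAct K r s n g (Npoly K r s n S ξ) = Npoly K r s n S ξ := by
  unfold Npoly
  split_ifs with hM' hM
  · exact hg.adjAct_minorDet (isBlockAdmissible_minorRows_minorCols hS hξ)
  · have hsuper : blockIdx r s ξ.2 ≤ blockIdx r s ξ.1 + 1 := by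
      simpa [Mprime, hM, blockIdx] using hM'
    rw [← Xmat_apply_of_mem hM, ← minorDet_singleton (Xmat K r s n)]
    exact hg.adjAct_minorDet (isBlockAdmissible_singleton hsuper)
  · exact map_zero _

/-- for every `ξ` in the broad base `T`, the polynomial `N_ξ` is
invariant under the adjoint action of the unipotent radical `U` of `P` on `K[m]`. -/
theorem statement10 (K : Type) [Field K] [IsAlgClosed K] [CharZero K]
    (n s : ℕ) (r : ℕ → ℕ) (hpos : ∀ k < s, 0 < r k) (hsum : Rsum r s = n)
    (S : Finset (Fin n × Fin n)) (hS : IsBase (Mset r s n) S)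
    (ξ : Fin n × Fin n) (hξ : ξ ∈ Tset r s n S)
    (g : Matrix (Fin n) (Fin n) K) (hg : InU r s n g) :
    adjAct K r s n g (Npoly K r s n S ξ) = Npoly K r s n S ξ :=
  statement10_general K n s r S hS ξ hξ g hg
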